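/- arXiv:1709.07847 — 3 statements merged into one kernel-verified Lean document; each statement's English description precedes it below -/
import Mathlib

section
/- Let α, β ≥ 0 with α + β < 1, where p_n denotes the n-th prime number. Then liminf_{n → ∞} p_n^β · (p_{n+1}^α − p_n^α) = 0. -/
/-!
Write `u n = p_n^β (p_{n+1}^α - p_n^α)`. Since `p_n^β ≤ p_N^β` for `n < N`, the sum
`∑_{n<N} u n` telescopes to at most `p_N^(α+β)`, and Chebyshev's lower bound
`π(x) ≫ x / log x` gives `p_N^s = o(N)` for every `s < 1`. So the averages of the nonnegative
sequence `u` tend to `0`, which forces `liminf u = 0`.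
-/

open Filter Real Finset Asymptotics
open scoped Nat.Prime

theorem isLittleO_rpow_primeCounting {s : ℝ} (hs : s < 1) :
    (fun n : ℕ => (n : ℝ) ^ s) =o[atTop] (fun n => (π n : ℝ)) := by
  have hlog : (fun x : ℝ => x ^ s * log x) =o[atTop] id := by
    refine ((isBigO_refl _ atTop).mul_isLittleO (isLittleO_log_rpow_atTop (sub_pos.2 hs))).congr'
      .rfl ?_
    filter_upwards [eventually_gt_atTop 0] with x hx
    rw [← rpow_add hx, add_sub_cancel, rpow_one, id]
  have hlog_succ : (fun x : ℝ => log (x + 1)) =o[atTop] id :=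
    (isLittleO_log_id_atTop.comp_tendsto (tendsto_atTop_add_const_right atTop 1 tendsto_id)
      ).trans_isBigO ((isBigO_refl id atTop).add (isLittleO_const_id_atTop 1).isBigO)
  have hlog2 : 0 < log 2 := log_pos one_lt_two
  refine IsLittleO.of_bound fun c hc => ?_
  filter_upwards [(hlog.bound (by positivity : 0 < c * log 2 / 2)).natCast_atTop,
    (hlog_succ.bound (half_pos hlog2)).natCast_atTop, eventually_ge_atTop 2]
    with n hsn hn_succ hn2
  have hn : (2 : ℝ) ≤ n := by exact_mod_cast hn2
  have hlogn : 0 < log n := log_pos (by linarith)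
  have hcheb := Chebyshev.pi_ge n
  rw [div_le_iff₀ hlogn] at hcheb
  simp only [id, norm_mul, norm_of_nonneg, rpow_nonneg, Nat.cast_nonneg, hlogn.le,
    log_nonneg (by linarith : (1 : ℝ) ≤ n + 1)] at hsn hn_succ ⊢
  have hpi : log 2 / 2 * n ≤ π n * log n := by linarith
  refine le_of_mul_le_mul_right ?_ hlogn
  calc (n : ℝ) ^ s * log n ≤ c * (log 2 / 2 * n) := by linarith
    _ ≤ c * π n * log n := by rw [mul_assoc]; gcongr

theorem isLittleO_nth_prime_rpow {s : ℝ} (hs : s < 1) :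
    (fun n => (Nat.nth Nat.Prime n : ℝ) ^ s) =o[atTop] (fun n => (n : ℝ)) := by
  have hpi : ∀ n, π (Nat.nth Nat.Prime n) = n + 1 :=
    Nat.count_nth_succ_of_infinite Nat.infinite_setOfPred_prime
  have hsucc : (fun n : ℕ => (n : ℝ) + 1) =O[atTop] (fun n => (n : ℝ)) :=
    (isBigO_refl _ _).add (isLittleO_const_id_atTop (1 : ℝ)).isBigO.natCast_atTop
  refine (((isLittleO_rpow_primeCounting hs).comp_tendsto
    (Nat.nth_strictMono Nat.infinite_setOfPred_prime).tendsto_atTop).congr_right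
    fun n => ?_).trans_isBigO hsucc
  simp [hpi]

theorem liminf_eq_zero_of_isLittleO_sum_range {u : ℕ → ℝ} (hu : ∀ n, 0 ≤ u n)
    (hsum : (fun N => ∑ n ∈ range N, u n) =o[atTop] (fun N => (N : ℝ))) :
    atTop.liminf u = 0 := by
  have hfreq : ∀ ε > 0, ∃ᶠ n in atTop, u n ≤ ε := by
    intro ε hε
    rw [frequently_atTop]
    intro n₀
    by_contra! hgt
    obtain ⟨N, hN, hNn₀⟩ :=
      ((hsum.bound (half_pos hε)).and (eventually_ge_atTop (2 * n₀ + 1))).exists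
    have hlower : ((N - n₀ : ℕ) : ℝ) * ε ≤ ∑ n ∈ range N, u n :=
      calc ((N - n₀ : ℕ) : ℝ) * ε = ∑ n ∈ Ico n₀ N, ε := by simp
        _ ≤ ∑ n ∈ Ico n₀ N, u n := sum_le_sum fun n hn => (hgt n (mem_Ico.1 hn).1).le
        _ ≤ ∑ n ∈ range N, u n :=
          sum_le_sum_of_subset_of_nonneg (fun n hn => by simp_all) fun n _ _ => hu n
    rw [norm_of_nonneg (sum_nonneg fun n _ => hu n), Real.norm_natCast] at hN
    rw [Nat.cast_sub (by omega)] at hlower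
    have : (2 * n₀ + 1 : ℝ) ≤ N := by exact_mod_cast hNn₀
    nlinarith
  have hbdd : IsBoundedUnder (· ≥ ·) atTop u := isBoundedUnder_of ⟨0, hu⟩
  refine le_antisymm (le_of_forall_pos_le_add fun ε hε => ?_) ?_
  · simpa using liminf_le_of_frequently_le (hfreq ε hε) hbdd
  · exact le_liminf_of_le (IsCoboundedUnder.of_frequently_le (hfreq 1 one_pos))
      (.of_forall hu)

theorem rpow_mul_sub_rpow_nonneg {a : ℕ → ℝ} (ha : Monotone a) (ha₀ : 0 ≤ a 0) {α : ℝ}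
    (hα : 0 ≤ α) (β : ℝ) (n : ℕ) : 0 ≤ a n ^ β * (a (n + 1) ^ α - a n ^ α) :=
  mul_nonneg (rpow_nonneg (ha₀.trans (ha n.zero_le)) _)
    (sub_nonneg.2 (rpow_le_rpow (ha₀.trans (ha n.zero_le)) (ha n.le_succ) hα))

theorem sum_range_rpow_mul_sub_rpow_le {a : ℕ → ℝ} (ha : Monotone a) (ha₀ : 0 ≤ a 0) {α β : ℝ}
    (hα : 0 ≤ α) (hβ : 0 ≤ β) (N : ℕ) :
    ∑ n ∈ range N, a n ^ β * (a (n + 1) ^ α - a n ^ α) ≤ a N ^ (α + β) := by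
  have ha_nonneg : ∀ n, 0 ≤ a n := fun n => ha₀.trans (ha n.zero_le)
  calc ∑ n ∈ range N, a n ^ β * (a (n + 1) ^ α - a n ^ α)
      ≤ ∑ n ∈ range N, a N ^ β * (a (n + 1) ^ α - a n ^ α) :=
        sum_le_sum fun n hn => mul_le_mul_of_nonneg_right
          (rpow_le_rpow (ha_nonneg n) (ha (mem_range.1 hn).le) hβ)
          (sub_nonneg.2 (rpow_le_rpow (ha_nonneg n) (ha n.le_succ) hα))
    _ = a N ^ β * (a N ^ α - a 0 ^ α) := by
        rw [← mul_sum, sum_range_sub (fun n => a n ^ α)]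
    _ ≤ a N ^ β * a N ^ α :=
        mul_le_mul_of_nonneg_left (sub_le_self _ (rpow_nonneg ha₀ _))
          (rpow_nonneg (ha_nonneg N) _)
    _ = a N ^ (α + β) := by rw [rpow_add_of_nonneg (ha_nonneg N) hα hβ, mul_comm]

theorem stmt_0 (α β : ℝ) (hα : 0 ≤ α) (hβ : 0 ≤ β) (hab : α + β < 1) :
    Filter.atTop.liminf (fun n : ℕ =>
      (Nat.nth Nat.Prime n : ℝ) ^ β *
        ((Nat.nth Nat.Prime (n + 1) : ℝ) ^ α - (Nat.nth Nat.Prime n : ℝ) ^ α)) = 0 := by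
  have hp : Monotone (fun n => (Nat.nth Nat.Prime n : ℝ)) := fun _ _ h =>
    Nat.cast_le.2 ((Nat.nth_strictMono Nat.infinite_setOfPred_prime).monotone h)
  have hp₀ : (0 : ℝ) ≤ Nat.nth Nat.Prime 0 := Nat.cast_nonneg _
  refine liminf_eq_zero_of_isLittleO_sum_range (rpow_mul_sub_rpow_nonneg hp hp₀ hα β) ?_
  refine (isBigO_of_le _ fun N => ?_).trans_isLittleO (isLittleO_nth_prime_rpow hab)
  rw [norm_of_nonneg (sum_nonneg fun n _ => rpow_mul_sub_rpow_nonneg hp hp₀ hα β n),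
    norm_of_nonneg (rpow_nonneg (hp₀.trans (hp N.zero_le)) _)]
  exact sum_range_rpow_mul_sub_rpow_le hp hp₀ hα hβ N
end

section
/- For every ε with 0 < ε ≤ 1/2, liminf_{n → ∞} p_n^{1/2 − ε} · (√p_{n+1} − √p_n) = 0, assuming there are infinitely many indices n such that p_{n+1} − p_n ≤ 246. -/
/-! Since √q − √p ≤ (q − p)/√p, the n-th term is at most (p_{n+1} − p_n) · p_n^{−ε}. Along the
infinitely many n with p_{n+1} − p_n ≤ 246 this is at most 246 · p_n^{−ε} → 0, and all terms are
nonnegative, so the liminf is 0. -/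

open Filter Topology

theorem Filter.liminf_eq_zero_of_frequently_le_of_tendsto {ι : Type*} {f : Filter ι}
    {u g : ι → ℝ} (hu : ∀ᶠ i in f, 0 ≤ u i) (hg : Tendsto g f (𝓝 0))
    (hug : ∃ᶠ i in f, u i ≤ g i) : liminf u f = 0 := by
  have hfreq : ∀ c > 0, ∃ᶠ i in f, u i ≤ c := fun c hc =>
    (hug.and_eventually (hg.eventually (gt_mem_nhds hc))).mono fun _ h => h.1.trans h.2.le
  have hbdd : IsBoundedUnder (· ≥ ·) f u := isBoundedUnder_of_eventually_ge hu
  refine le_antisymm (le_of_forall_pos_le_add fun c hc => ?_) ?_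
  · simpa using liminf_le_of_frequently_le (hfreq c hc) hbdd
  · exact le_liminf_of_le (IsCoboundedUnder.of_frequently_le (hfreq 1 one_pos)) hu

theorem Real.sqrt_sub_sqrt_le_div_sqrt {x y : ℝ} (hx : 0 < x) (hxy : x ≤ y) :
    √y - √x ≤ (y - x) / √x := by
  have hsx : 0 < √x := Real.sqrt_pos.mpr hx
  have hsxy : √x ≤ √y := Real.sqrt_le_sqrt hxy
  rw [le_div_iff₀ hsx]
  nlinarith [Real.sq_sqrt hx.le, Real.sq_sqrt (hx.le.trans hxy)]

theorem Real.rpow_mul_sqrt_sub_sqrt_le {x y : ℝ} (hx : 0 < x) (hxy : x ≤ y) (ε : ℝ) :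
    x ^ (1 / 2 - ε) * (√y - √x) ≤ (y - x) * x ^ (-ε) := by
  have hsplit : x ^ (1 / 2 - ε) = √x * x ^ (-ε) := by
    rw [Real.sqrt_eq_rpow, ← Real.rpow_add hx, sub_eq_add_neg]
  calc x ^ (1 / 2 - ε) * (√y - √x)
      ≤ x ^ (1 / 2 - ε) * ((y - x) / √x) :=
        mul_le_mul_of_nonneg_left (Real.sqrt_sub_sqrt_le_div_sqrt hx hxy) (by positivity)
    _ = (y - x) * x ^ (-ε) := by
        rw [hsplit]; field_simp [(Real.sqrt_pos.mpr hx).ne']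

theorem Nat.tendsto_nth_prime_atTop : Tendsto (Nat.nth Nat.Prime) atTop atTop :=
  (Nat.nth_strictMono Nat.infinite_setOfPred_prime).tendsto_atTop

theorem Nat.nth_prime_mono : Monotone (Nat.nth Nat.Prime) :=
  (Nat.nth_strictMono Nat.infinite_setOfPred_prime).monotone

theorem stmt_5_general
    (hgap : {n : ℕ | Nat.nth Nat.Prime (n + 1) - Nat.nth Nat.Prime n ≤ 246}.Infinite)
    (ε : ℝ) (hε0 : 0 < ε) :
    Filter.atTop.liminf (fun n : ℕ =>
      (Nat.nth Nat.Prime n : ℝ) ^ ((1 : ℝ) / 2 - ε) *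
        (Real.sqrt (Nat.nth Nat.Prime (n + 1)) - Real.sqrt (Nat.nth Nat.Prime n))) = 0 := by
  have hp (n : ℕ) : (0 : ℝ) < Nat.nth Nat.Prime n := mod_cast (Nat.prime_nth_prime n).pos
  have hpp (n : ℕ) : (Nat.nth Nat.Prime n : ℝ) ≤ Nat.nth Nat.Prime (n + 1) :=
    mod_cast Nat.nth_prime_mono n.le_succ
  refine liminf_eq_zero_of_frequently_le_of_tendsto
    (g := fun n => 246 * (Nat.nth Nat.Prime n : ℝ) ^ (-ε))
    (Eventually.of_forall fun n => mul_nonneg (by positivity)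
      (sub_nonneg.mpr (Real.sqrt_le_sqrt (hpp n)))) ?_ ?_
  · simpa using ((tendsto_rpow_neg_atTop hε0).comp
      (tendsto_natCast_atTop_atTop.comp Nat.tendsto_nth_prime_atTop)).const_mul 246
  · refine (Nat.frequently_atTop_iff_infinite.mpr hgap).mono fun n (hn : _ ≤ 246) => ?_
    have hgap_real : (Nat.nth Nat.Prime (n + 1) : ℝ) - Nat.nth Nat.Prime n ≤ 246 := by
      simpa [Nat.cast_sub (Nat.nth_prime_mono n.le_succ)] using (Nat.cast_le (α := ℝ)).mpr hn
    exact (Real.rpow_mul_sqrt_sub_sqrt_le (hp n) (hpp n) ε).trans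
      (mul_le_mul_of_nonneg_right hgap_real (by positivity))

theorem stmt_5
    (hgap : {n : ℕ | Nat.nth Nat.Prime (n + 1) - Nat.nth Nat.Prime n ≤ 246}.Infinite)
    (ε : ℝ) (hε0 : 0 < ε) (hε1 : ε ≤ 1 / 2) :
    Filter.atTop.liminf (fun n : ℕ =>
      (Nat.nth Nat.Prime n : ℝ) ^ ((1 : ℝ) / 2 - ε) *
        (Real.sqrt (Nat.nth Nat.Prime (n + 1)) - Real.sqrt (Nat.nth Nat.Prime n))) = 0 :=
  stmt_5_general hgap ε hε0
end

section
/- Assume Cramér's Conjecture: there exists a constant C > 0 such that p_{n+1} − p_n < C·(log n)^2 for all sufficiently large n. Then for all α, β ≥ 0 with α + β < 1, there exists a constant C(α, β) such that p_n^β · (p_{n+1}^α − p_n^α) ≤ C(α, β) for all n. -/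
/-!
By concavity of `t ↦ t ^ α`, `p_n ^ β (p_{n+1} ^ α - p_n ^ α) ≤ α (p_{n+1} - p_n) p_n ^ (α + β - 1)`,
and `p_n ≥ n` with `α + β - 1 < 0` turns the last factor into `n ^ (α + β - 1)`. Under Cramér's
conjecture the right-hand side is then `O((log n) ^ 2 n ^ (α + β - 1))`, which tends to `0`; a real
sequence that is eventually bounded above is bounded above.
-/

open Real Filter

lemma Real.rpow_sub_rpow_le_mul_sub_mul_rpow_sub_one {x y a : ℝ} (hy : 0 < y) (hyx : y ≤ x)
    (ha : 0 ≤ a) (ha1 : a ≤ 1) : x ^ a - y ^ a ≤ a * (x - y) * y ^ (a - 1) := by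
  have hratio : (-1 : ℝ) ≤ x / y - 1 := by
    have : 0 ≤ x / y := div_nonneg (hy.le.trans hyx) hy.le
    linarith
  have bernoulli := rpow_one_add_le_one_add_mul_self hratio ha ha1
  rw [add_sub_cancel, div_rpow (hy.le.trans hyx) hy.le, div_le_iff₀ (rpow_pos_of_pos hy a)]
    at bernoulli
  calc x ^ a - y ^ a ≤ (1 + a * (x / y - 1)) * y ^ a - y ^ a := by linarith
    _ = a * (x - y) * (y ^ a / y) := by field_simp; ring
    _ = a * (x - y) * y ^ (a - 1) := by rw [rpow_sub_one hy.ne']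

lemma Real.rpow_mul_rpow_sub_rpow_le {x y α β : ℝ} (hy : 0 < y) (hyx : y ≤ x)
    (hα : 0 ≤ α) (hα1 : α ≤ 1) : y ^ β * (x ^ α - y ^ α) ≤ α * (x - y) * y ^ (α + β - 1) :=
  calc y ^ β * (x ^ α - y ^ α) ≤ y ^ β * (α * (x - y) * y ^ (α - 1)) :=
        mul_le_mul_of_nonneg_left (rpow_sub_rpow_le_mul_sub_mul_rpow_sub_one hy hyx hα hα1)
          (rpow_nonneg hy.le β)
    _ = α * (x - y) * y ^ (α + β - 1) := by
        rw [show α + β - 1 = β + (α - 1) by ring, rpow_add hy]; ring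

lemma tendsto_log_sq_mul_rpow_atTop_nhds_zero {s : ℝ} (hs : s < 0) :
    Tendsto (fun x : ℝ => log x ^ 2 * x ^ s) atTop (nhds 0) := by
  refine ((isLittleO_log_rpow_rpow_atTop 2 (neg_pos.mpr hs)).tendsto_div_nhds_zero).congr' ?_
  filter_upwards [eventually_gt_atTop 0] with x hx
  rw [div_eq_mul_inv, ← rpow_neg hx.le, neg_neg, rpow_two]

lemma nth_prime_rpow_mul_sub_rpow_le {α β : ℝ} (hα : 0 ≤ α) (hα1 : α ≤ 1) (hαβ : α + β ≤ 1)
    {n : ℕ} (hn : 0 < n) :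
    (Nat.nth Nat.Prime n : ℝ) ^ β *
        ((Nat.nth Nat.Prime (n + 1) : ℝ) ^ α - (Nat.nth Nat.Prime n : ℝ) ^ α) ≤
      α * ((Nat.nth Nat.Prime (n + 1) : ℝ) - Nat.nth Nat.Prime n) * (n : ℝ) ^ (α + β - 1) := by
  have hp : (0 : ℝ) < Nat.nth Nat.Prime n := mod_cast (Nat.prime_nth_prime n).pos
  have hmono : (Nat.nth Nat.Prime n : ℝ) ≤ Nat.nth Nat.Prime (n + 1) :=
    mod_cast (Nat.nth_le_nth Nat.infinite_setOfPred_prime).mpr n.le_succ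
  have hnp : (n : ℝ) ≤ Nat.nth Nat.Prime n :=
    mod_cast Nat.le_nth fun hf => absurd hf Nat.infinite_setOfPred_prime
  refine (rpow_mul_rpow_sub_rpow_le hp hmono hα hα1).trans ?_
  exact mul_le_mul_of_nonneg_left
    (rpow_le_rpow_of_nonpos (mod_cast hn) hnp (by linarith))
    (mul_nonneg hα (sub_nonneg.mpr hmono))

theorem stmt_8
    (hCramer : ∃ C : ℝ, 0 < C ∧ ∀ᶠ n : ℕ in Filter.atTop,
      (Nat.nth Nat.Prime (n + 1) : ℝ) - (Nat.nth Nat.Prime n : ℝ) < C * (Real.log n) ^ 2)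
    (α β : ℝ) (hα : 0 ≤ α) (hβ : 0 ≤ β) (hab : α + β < 1) :
    ∃ Cαβ : ℝ, ∀ n : ℕ,
      (Nat.nth Nat.Prime n : ℝ) ^ β *
        ((Nat.nth Nat.Prime (n + 1) : ℝ) ^ α - (Nat.nth Nat.Prime n : ℝ) ^ α) ≤ Cαβ := by
  obtain ⟨C, -, hCramer⟩ := hCramer
  set p : ℕ → ℝ := fun n => Nat.nth Nat.Prime n
  have hbound : ∀ᶠ n : ℕ in atTop,
      p n ^ β * (p (n + 1) ^ α - p n ^ α) ≤ α * C * (log n ^ 2 * (n : ℝ) ^ (α + β - 1)) := by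
    filter_upwards [hCramer, eventually_gt_atTop 0] with n hgap hn
    calc p n ^ β * (p (n + 1) ^ α - p n ^ α)
        ≤ α * (p (n + 1) - p n) * (n : ℝ) ^ (α + β - 1) :=
          nth_prime_rpow_mul_sub_rpow_le hα (by linarith) hab.le hn
      _ ≤ α * (C * log n ^ 2) * (n : ℝ) ^ (α + β - 1) := by gcongr
      _ = α * C * (log n ^ 2 * (n : ℝ) ^ (α + β - 1)) := by ring
  have hdecay : Tendsto (fun n : ℕ => α * C * (log n ^ 2 * (n : ℝ) ^ (α + β - 1)))
      atTop (nhds 0) := by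
    simpa using ((tendsto_log_sq_mul_rpow_atTop_nhds_zero (by linarith)).comp
      tendsto_natCast_atTop_atTop).const_mul (α * C)
  obtain ⟨Cαβ, hCαβ⟩ := (hdecay.isBoundedUnder_le.mono_le hbound).bddAbove_range
  exact ⟨Cαβ, fun n => hCαβ ⟨n, rfl⟩⟩
end
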